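/- arXiv:2111.00838 — 2 statements merged into one kernel-verified Lean document; each statement's English description precedes it below -/
import Mathlib

section
/- Let n = m ≥ 2 and let λ, μ ∈ 𝕂 with λμ ≠ 0. The odd bilinear form ω on the filiform Lie superalgebra L^{n,n} determined (together with anti-symmetry, i.e. ω(Y_j,X_i) = -ω(X_i,Y_j)) by ω(X₁,Y_n) = λ, ω(X_i,Y_{n+1−i}) = (−1)^{n−i} μ for 2 ≤ i ≤ n, and ω = 0 on all other pairs of basis vectors, is a closed anti-symmetric non-degenerate odd (periplectic) form; hence (L^{n,n}, ω) is a periplectic quasi-Frobenius Lie superalgebra. -/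
noncomputable section

/-- The sign `(−1)^{ij}` for parities `i, j` encoded as booleans
(`false` = even, `true` = odd). -/
def ssign (K : Type*) [Field K] (i j : Bool) : K := if i && j then -1 else 1

section Defs

variable (K : Type*) [Field K]

/-- A map `f : V → V → W` is bilinear over `K`. -/
def IsBilinMap (V W : Type*) [AddCommGroup V] [Module K V] [AddCommGroup W] [Module K W]
    (f : V → V → W) : Prop :=
  (∀ x y z : V, f (x + y) z = f x z + f y z) ∧
  (∀ (c : K) (x y : V), f (c • x) y = c • f x y) ∧
  (∀ x y z : V, f x (y + z) = f x y + f x z) ∧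
  (∀ (c : K) (x y : V), f x (c • y) = c • f x y)

variable (V : Type*) [AddCommGroup V] [Module K V]

/-- A Lie superalgebra structure over `K` on the `ℤ/2`-graded space `V`,
with homogeneous components `sub false` (even part) and `sub true` (odd part),
and bracket `br`.  Includes super anti-commutativity, the super Jacobi identity,
and (when `char K = 3`) the extra cubic condition on odd elements. -/
structure IsLieSuperAlg (sub : Bool → Submodule K V) (br : V → V → V) : Prop where
  compl : IsCompl (sub false) (sub true)
  bilin : IsBilinMap K V V br
  graded : ∀ i j : Bool, ∀ x ∈ sub i, ∀ y ∈ sub j, br x y ∈ sub (Bool.xor i j)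
  antisymm : ∀ i j : Bool, ∀ x ∈ sub i, ∀ y ∈ sub j, br y x = -(ssign K i j • br x y)
  jacobi : ∀ i j k : Bool, ∀ x ∈ sub i, ∀ y ∈ sub j, ∀ z ∈ sub k,
    ssign K i k • br x (br y z) + ssign K j i • br y (br z x) + ssign K k j • br z (br x y) = 0
  jacobi3 : ringChar K = 3 → ∀ f ∈ sub true, br f (br f f) = 0

/-- Graded anti-symmetry of a bilinear form: `ω(y,x) = -(-1)^{p(x)p(y)} ω(x,y)`. -/
def IsSuperSkew (sub : Bool → Submodule K V) (ω : V → V → K) : Prop :=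
  ∀ i j : Bool, ∀ x ∈ sub i, ∀ y ∈ sub j, ω y x = -(ssign K i j * ω x y)

/-- Closedness (2-cocycle condition) of a bilinear form with respect to a bracket. -/
def IsClosedForm (sub : Bool → Submodule K V) (br : V → V → V) (ω : V → V → K) : Prop :=
  ∀ i j k : Bool, ∀ x ∈ sub i, ∀ y ∈ sub j, ∀ z ∈ sub k,
    ssign K i k * ω x (br y z) + ssign K k j * ω z (br x y) + ssign K j i * ω y (br z x) = 0

/-- Non-degeneracy of a bilinear form. -/
def IsNondegForm (ω : V → V → K) : Prop := ∀ x : V, (∀ y : V, ω x y = 0) → x = 0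

/-- A bilinear form is even if it vanishes on pairs of homogeneous elements
of opposite parity. -/
def IsEvenForm (sub : Bool → Submodule K V) (ω : V → V → K) : Prop :=
  ∀ x y : V, (x ∈ sub false ∧ y ∈ sub true) ∨ (x ∈ sub true ∧ y ∈ sub false) → ω x y = 0

/-- A bilinear form is odd if it vanishes on pairs of homogeneous elements
of the same parity. -/
def IsOddForm (sub : Bool → Submodule K V) (ω : V → V → K) : Prop :=
  ∀ i : Bool, ∀ x ∈ sub i, ∀ y ∈ sub i, ω x y = 0

/-- `(𝔤, ω)` is quasi-Frobenius: `ω` is a closed anti-symmetric non-degenerate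
bilinear form. -/
def IsQuasiFrobenius (sub : Bool → Submodule K V) (br : V → V → V) (ω : V → V → K) : Prop :=
  IsBilinMap K V K ω ∧ IsSuperSkew K V sub ω ∧ IsClosedForm K V sub br ω ∧ IsNondegForm K V ω

end Defs

/-!
The decomposition `V = V₀ ⊕ V₁` forces `V₀ = span {Xᵢ}` and `V₁ = span {Yⱼ}`, so every property
of `ω` can be checked on basis vectors. Since `ω` is odd and `[V₁,V₁] = 0`, closedness only has
content on triples `(X_a, X_b, Y_c)`, where it says that `ad X₁` is `ω`-skew:
`ω(X_{b+1},Y_c) = -ω(X_b,Y_{c+1})` (with `X_{n+1} = Y_{n+1} = 0`), which is what the alternating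
signs `(-1)^{n-i}` achieve. Non-degeneracy holds because `ω` pairs each basis vector with exactly
one other, with value `±λ` or `±μ`.
-/

theorem Submodule.span_eq_of_isCompl {R M : Type*} [Ring R] [AddCommGroup M] [Module R M]
    {A B : Submodule R M} {s t : Set M} (hAB : IsCompl A B) (hs : s ⊆ A) (ht : t ⊆ B)
    (hst : ⊤ ≤ Submodule.span R (s ∪ t)) :
    Submodule.span R s = A ∧ Submodule.span R t = B := by
  rw [Submodule.span_union, top_le_iff] at hst
  have hsA := Submodule.span_le.2 hs
  have htB := Submodule.span_le.2 ht
  refine ⟨eq_of_le_of_inf_le_of_le_sup hsA ?_ (hst ▸ le_top),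
    eq_of_le_of_inf_le_of_le_sup htB ?_ (sup_comm (span R s) _ ▸ hst ▸ le_top)⟩
  · exact (inf_le_inf_left A htB).trans (hAB.inf_eq_bot ▸ bot_le)
  · exact (inf_le_inf_left B hsA).trans (inf_comm A B ▸ hAB.inf_eq_bot ▸ bot_le)

theorem LinearMap.eq_zero_of_forall_apply_eq_zero_of_basis {ι R M N : Type*} [CommRing R]
    [NoZeroDivisors R] [AddCommGroup M] [Module R M] [AddCommGroup N] [Module R N]
    (B : M →ₗ[R] N →ₗ[R] R) (b : Module.Basis ι R M) (d : ι → N)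
    (hoff : ∀ i j, i ≠ j → B (b i) (d j) = 0) (hdiag : ∀ i, B (b i) (d i) ≠ 0) {x : M}
    (hx : ∀ y, B x y = 0) : x = 0 := by
  refine b.forall_coord_eq_zero_iff.1 fun i => ?_
  have hcoord : B.flip (d i) = B (b i) (d i) • b.coord i := b.ext fun j => by
    rcases eq_or_ne j i with rfl | hji
    · simp
    · simp [hoff j i hji, hji.symm]
  have hxi := hx (d i)
  rw [← B.flip_apply, hcoord, LinearMap.smul_apply, smul_eq_mul] at hxi
  exact (mul_eq_zero.1 hxi).resolve_left (hdiag i)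

section Bilinear

variable {K V W : Type*} [Field K] [AddCommGroup V] [Module K V] [AddCommGroup W] [Module K W]
  {f : V → V → W}

def IsBilinMap.toLinearMap₂ (hf : IsBilinMap K V W f) : V →ₗ[K] V →ₗ[K] W :=
  LinearMap.mk₂ K f hf.1 hf.2.1 hf.2.2.1 hf.2.2.2

@[simp]
lemma IsBilinMap.toLinearMap₂_apply (hf : IsBilinMap K V W f) (x y : V) :
    hf.toLinearMap₂ x y = f x y := rfl

lemma IsBilinMap.zero_left (hf : IsBilinMap K V W f) (y : V) : f 0 y = 0 :=
  LinearMap.map_zero₂ hf.toLinearMap₂ y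

lemma IsBilinMap.zero_right (hf : IsBilinMap K V W f) (x : V) : f x 0 = 0 :=
  map_zero (hf.toLinearMap₂ x)

lemma IsBilinMap.neg_right (hf : IsBilinMap K V W f) (x y : V) : f x (-y) = -f x y :=
  map_neg (hf.toLinearMap₂ x) y

lemma IsBilinMap.apply_eq_zero_of_mem_span (hf : IsBilinMap K V W f) {s t : Set V}
    (h : ∀ x ∈ s, ∀ y ∈ t, f x y = 0) {x y : V} (hx : x ∈ Submodule.span K s)
    (hy : y ∈ Submodule.span K t) : f x y = 0 := by
  have hmem := Submodule.apply_mem_map₂ hf.toLinearMap₂ hx hy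
  rwa [Submodule.map₂_span_span, Submodule.span_eq_bot.2 ?_, Submodule.mem_bot] at hmem
  rintro _ ⟨x, hx, y, hy, rfl⟩
  exact h x hx y hy

theorem IsBilinMap.flip_eq_neg_of_basis {ι : Type*} {ω : V → V → K}
    (hω : IsBilinMap K V K ω) (b : Module.Basis ι K V)
    (h : ∀ i j, ω (b j) (b i) = -ω (b i) (b j)) (x y : V) : ω y x = -ω x y :=
  LinearMap.congr_fun₂ (LinearMap.ext_basis b b (B := hω.toLinearMap₂.flip)
    (B' := -hω.toLinearMap₂) h) x y

end Bilinear

section SuperForm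

/-- Up to the signs `ssign`, closedness of `ω` says that this vanishes on homogeneous triples. -/
def cocycleSum {K V : Type*} [Field K] (br : V → V → V) (ω : V → V → K) (x y z : V) : K :=
  ω x (br y z) + ω z (br x y) + ω y (br z x)

lemma cocycleSum_cyclic {K V : Type*} [Field K] {br : V → V → V} {ω : V → V → K} (x y z : V) :
    cocycleSum br ω x y z = cocycleSum br ω y z x := by
  unfold cocycleSum
  ring

variable {K V : Type*} [Field K] [AddCommGroup V] [Module K V]
  {sub : Bool → Submodule K V} {br : V → V → V} {ω : V → V → K}

lemma cocycleSum_eq_zero_of_mem_span (hbr : IsBilinMap K V V br) (hω : IsBilinMap K V K ω)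
    {s t u : Set V} (h : ∀ x ∈ s, ∀ y ∈ t, ∀ z ∈ u, cocycleSum br ω x y z = 0) {x y z : V}
    (hx : x ∈ Submodule.span K s) (hy : y ∈ Submodule.span K t) (hz : z ∈ Submodule.span K u) :
    cocycleSum br ω x y z = 0 := by
  have extend : ∀ {s : Set V} (y z : V), (∀ x ∈ s, cocycleSum br ω x y z = 0) →
      ∀ x ∈ Submodule.span K s, cocycleSum br ω x y z = 0 := by
    intro s y z h x hx
    let B := hω.toLinearMap₂
    let L := hbr.toLinearMap₂
    -- `φ = cocycleSum br ω · y z`; cyclicity then transports linearity to the other slots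
    let φ : V →ₗ[K] K := B.flip (L y z) + (B z).comp (L.flip y) + (B y).comp (L z)
    exact (Submodule.span_le (p := LinearMap.ker φ)).2 h hx
  have hx' : ∀ y ∈ t, ∀ z ∈ u, cocycleSum br ω x y z = 0 := fun y hy z hz =>
    extend y z (fun x hx => h x hx y hy z hz) x hx
  have hxy' : ∀ z ∈ u, cocycleSum br ω x y z = 0 := fun z hz => by
    rw [cocycleSum_cyclic]
    refine extend z x (fun y hy => ?_) y hy
    rw [← cocycleSum_cyclic]
    exact hx' y hy z hz
  rw [cocycleSum_cyclic, cocycleSum_cyclic]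
  refine extend x y (fun z hz => ?_) z hz
  rw [← cocycleSum_cyclic, ← cocycleSum_cyclic]
  exact hxy' z hz

/-- For an odd form and a graded bracket, `ω(x,[y,z])` vanishes unless `p(x) + p(y) + p(z)` is odd,
so closedness only has content on triples of parities `(0,0,1)` (up to rotation), where all signs
are `1`, and `(1,1,1)`. -/
theorem isClosedForm_of_cocycleSum
    (hgr : ∀ i j : Bool, ∀ x ∈ sub i, ∀ y ∈ sub j, br x y ∈ sub (Bool.xor i j))
    (hodd : IsOddForm K V sub ω)
    (h₀₀₁ : ∀ x ∈ sub false, ∀ y ∈ sub false, ∀ z ∈ sub true, cocycleSum br ω x y z = 0)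
    (h₁₁₁ : ∀ x ∈ sub true, ∀ y ∈ sub true, ∀ z ∈ sub true, cocycleSum br ω x y z = 0) :
    IsClosedForm K V sub br ω := by
  have hvanish : ∀ j k : Bool, ∀ x ∈ sub (Bool.xor j k), ∀ y ∈ sub j, ∀ z ∈ sub k,
      ω x (br y z) = 0 := fun j k x hx y hy z hz => hodd _ x hx _ (hgr j k y hy z hz)
  simp only [cocycleSum] at h₀₀₁ h₁₁₁
  intro i j k x hx y hy z hz
  cases i <;> cases j <;> cases k <;> simp only [ssign, Bool.and_self, Bool.and_false,
    Bool.and_true, Bool.false_eq_true, if_false, if_true, one_mul, neg_one_mul]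
  · rw [hvanish false false x hx y hy z hz, hvanish false false z hz x hx y hy,
      hvanish false false y hy z hz x hx]
    ring
  · exact h₀₀₁ x hx y hy z hz
  · linear_combination h₀₀₁ z hz x hx y hy
  · rw [hvanish true true x hx y hy z hz, hvanish false true z hz x hx y hy,
      hvanish true false y hy z hz x hx]
    ring
  · linear_combination h₀₀₁ y hy z hz x hx
  · rw [hvanish false true x hx y hy z hz, hvanish true false z hz x hx y hy,
      hvanish true true y hy z hz x hx]
    ring
  · rw [hvanish true false x hx y hy z hz, hvanish true true z hz x hx y hy,
      hvanish false true y hy z hz x hx]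
    ring
  · linear_combination -h₁₁₁ x hx y hy z hz

theorem isSuperSkew_of_forall_flip (hodd : IsOddForm K V sub ω)
    (hflip : ∀ x y, ω y x = -ω x y) : IsSuperSkew K V sub ω := by
  intro i j x hx y hy
  rw [hflip x y]
  cases i <;> cases j <;> simp only [ssign, Bool.and_self, Bool.and_false, Bool.and_true,
    Bool.false_eq_true, if_false, if_true, one_mul]
  rw [hodd true x hx y hy, mul_zero, neg_zero]

theorem IsLieSuperAlg.br_swap_of_mem_even (hLie : IsLieSuperAlg K V sub br) {j : Bool}
    {x y : V} (hx : x ∈ sub false) (hy : y ∈ sub j) : br y x = -br x y := by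
  simpa [ssign] using hLie.antisymm false j x hx y hy

end SuperForm

section Filiform

variable {K V : Type*} [Field K] [AddCommGroup V] [Module K V] {n : ℕ} {X Y : ℕ → V}
  {br : V → V → V} {ω : V → V → K}

theorem filiform_form_flip
    (hind : LinearIndependent K
      (Sum.elim (fun i : Fin n => X (i.val + 1)) (fun j : Fin n => Y (j.val + 1))))
    (hspan : ⊤ ≤ Submodule.span K (Set.range
      (Sum.elim (fun i : Fin n => X (i.val + 1)) (fun j : Fin n => Y (j.val + 1)))))
    (hωbil : IsBilinMap K V K ω)
    (hωXX : ∀ i j, 1 ≤ i → i ≤ n → 1 ≤ j → j ≤ n → ω (X i) (X j) = 0)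
    (hωYY : ∀ i j, 1 ≤ i → i ≤ n → 1 ≤ j → j ≤ n → ω (Y i) (Y j) = 0)
    (hωYX : ∀ i j, 1 ≤ i → i ≤ n → 1 ≤ j → j ≤ n → ω (Y j) (X i) = -ω (X i) (Y j))
    (x y : V) : ω y x = -ω x y := by
  refine hωbil.flip_eq_neg_of_basis (Module.Basis.mk hind hspan) ?_ x y
  rintro (i | i) (j | j) <;> have := i.isLt <;> have := j.isLt <;>
    simp only [Module.Basis.mk_apply, Sum.elim_inl, Sum.elim_inr]
  · rw [hωXX _ _ (by omega) (by omega) (by omega) (by omega),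
      hωXX _ _ (by omega) (by omega) (by omega) (by omega), neg_zero]
  · exact hωYX _ _ (by omega) (by omega) (by omega) (by omega)
  · rw [hωYX _ _ (by omega) (by omega) (by omega) (by omega), neg_neg]
  · rw [hωYY _ _ (by omega) (by omega) (by omega) (by omega),
      hωYY _ _ (by omega) (by omega) (by omega) (by omega), neg_zero]

theorem filiform_form_isOddForm {sub : Bool → Submodule K V}
    (hV₀ : Submodule.span K (Set.range fun i : Fin n => X (i.val + 1)) = sub false)
    (hV₁ : Submodule.span K (Set.range fun j : Fin n => Y (j.val + 1)) = sub true)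
    (hωbil : IsBilinMap K V K ω)
    (hωXX : ∀ i j, 1 ≤ i → i ≤ n → 1 ≤ j → j ≤ n → ω (X i) (X j) = 0)
    (hωYY : ∀ i j, 1 ≤ i → i ≤ n → 1 ≤ j → j ≤ n → ω (Y i) (Y j) = 0) :
    IsOddForm K V sub ω := by
  rintro (_ | _) x hx y hy
  · rw [← hV₀] at hx hy
    refine hωbil.apply_eq_zero_of_mem_span ?_ hx hy
    rintro _ ⟨i, rfl⟩ _ ⟨j, rfl⟩
    exact hωXX _ _ (by omega) (by omega) (by omega) (by omega)
  · rw [← hV₁] at hx hy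
    refine hωbil.apply_eq_zero_of_mem_span ?_ hx hy
    rintro _ ⟨i, rfl⟩ _ ⟨j, rfl⟩
    exact hωYY _ _ (by omega) (by omega) (by omega) (by omega)

theorem filiform_form_ad_X_one_skew (hωbil : IsBilinMap K V K ω)
    (hbrXX : ∀ i, 2 ≤ i → i ≤ n - 1 → br (X 1) (X i) = X (i + 1))
    (hbrX1n : br (X 1) (X n) = 0)
    (hbrXY : ∀ j, 1 ≤ j → j ≤ n - 1 → br (X 1) (Y j) = Y (j + 1))
    (hbrXYn : br (X 1) (Y n) = 0) {mu : K}
    (hω2 : ∀ i, 2 ≤ i → i ≤ n → ω (X i) (Y (n + 1 - i)) = (-1 : K) ^ (n - i) * mu)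
    (hωXY0 : ∀ i j, 1 ≤ i → i ≤ n → 1 ≤ j → j ≤ n →
      ¬(i = 1 ∧ j = n) → ¬(2 ≤ i ∧ j = n + 1 - i) → ω (X i) (Y j) = 0)
    {b c : ℕ} (hb₁ : 2 ≤ b) (hb₂ : b ≤ n) (hc₁ : 1 ≤ c) (hc₂ : c ≤ n) :
    ω (br (X 1) (X b)) (Y c) + ω (X b) (br (X 1) (Y c)) = 0 := by
  obtain rfl | hbn := eq_or_lt_of_le hb₂
  · rw [hbrX1n, hωbil.zero_left, zero_add]
    obtain rfl | hcn := eq_or_lt_of_le hc₂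
    · rw [hbrXYn, hωbil.zero_right]
    · rw [hbrXY c hc₁ (by omega)]
      exact hωXY0 _ _ (by omega) le_rfl (by omega) (by omega) (by omega) (by omega)
  rw [hbrXX b hb₁ (by omega)]
  obtain rfl | hcn := eq_or_lt_of_le hc₂
  · rw [hbrXYn, hωbil.zero_right, add_zero]
    exact hωXY0 _ _ (by omega) (by omega) (by omega) le_rfl (by omega) (by omega)
  rw [hbrXY c hc₁ (by omega)]
  by_cases hbc : b + c = n
  · obtain rfl := hbc
    have h₁ := hω2 (b + 1) (by omega) (by omega)
    have h₂ := hω2 b hb₁ hb₂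
    rw [show b + c + 1 - (b + 1) = c by omega] at h₁
    rw [show b + c + 1 - b = c + 1 by omega, show b + c - b = (b + c - (b + 1)) + 1 by omega,
      pow_succ] at h₂
    rw [h₁, h₂]
    ring
  · rw [hωXY0 _ _ (by omega) (by omega) (by omega) (by omega) (by omega) (by omega),
      hωXY0 _ _ (by omega) (by omega) (by omega) (by omega) (by omega) (by omega), add_zero]

theorem filiform_cocycleSum_X_X_Y {sub : Bool → Submodule K V} (hLie : IsLieSuperAlg K V sub br)
    (hXeven : ∀ i, 1 ≤ i → i ≤ n → X i ∈ sub false)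
    (hYodd : ∀ j, 1 ≤ j → j ≤ n → Y j ∈ sub true)
    (hbrX11 : br (X 1) (X 1) = 0)
    (hbrXX0 : ∀ i j, 2 ≤ i → i ≤ n → 2 ≤ j → j ≤ n → br (X i) (X j) = 0)
    (hbrXY0 : ∀ i j, 2 ≤ i → i ≤ n → 1 ≤ j → j ≤ n → br (X i) (Y j) = 0)
    (hωbil : IsBilinMap K V K ω) (hflip : ∀ x y, ω y x = -ω x y)
    (hskew : ∀ b c, 2 ≤ b → b ≤ n → 1 ≤ c → c ≤ n →
      ω (br (X 1) (X b)) (Y c) + ω (X b) (br (X 1) (Y c)) = 0)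
    {a b c : ℕ} (ha₁ : 1 ≤ a) (ha₂ : a ≤ n) (hb₁ : 1 ≤ b) (hb₂ : b ≤ n) (hc₁ : 1 ≤ c)
    (hc₂ : c ≤ n) :
    cocycleSum br ω (X a) (X b) (Y c) = 0 := by
  have hYX : ∀ a, 1 ≤ a → a ≤ n → br (Y c) (X a) = -br (X a) (Y c) := fun a h₁ h₂ =>
    hLie.br_swap_of_mem_even (hXeven a h₁ h₂) (hYodd c hc₁ hc₂)
  unfold cocycleSum
  obtain rfl | ha := eq_or_lt_of_le ha₁ <;> obtain rfl | hb := eq_or_lt_of_le hb₁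
  · rw [hbrX11, hωbil.zero_right, hYX 1 le_rfl ha₂, hωbil.neg_right]
    ring
  · rw [hbrXY0 b c hb hb₂ hc₁ hc₂, hωbil.zero_right, hflip _ (Y c), hYX 1 le_rfl ha₂,
      hωbil.neg_right]
    linear_combination -hskew b c hb hb₂ hc₁ hc₂
  · rw [hYX a ha₁ ha₂, hbrXY0 a c ha ha₂ hc₁ hc₂, neg_zero, hωbil.zero_right,
      hLie.br_swap_of_mem_even (hXeven 1 le_rfl hb₂) (hXeven a ha₁ ha₂), hωbil.neg_right,
      hflip _ (Y c)]
    linear_combination hskew a c ha ha₂ hc₁ hc₂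
  · rw [hbrXY0 b c hb hb₂ hc₁ hc₂, hbrXX0 a b ha ha₂ hb hb₂, hYX a ha₁ ha₂,
      hbrXY0 a c ha ha₂ hc₁ hc₂, neg_zero, hωbil.zero_right, hωbil.zero_right,
      hωbil.zero_right]
    ring

theorem filiform_form_nondegenerate
    (hind : LinearIndependent K
      (Sum.elim (fun i : Fin n => X (i.val + 1)) (fun j : Fin n => Y (j.val + 1))))
    (hspan : ⊤ ≤ Submodule.span K (Set.range
      (Sum.elim (fun i : Fin n => X (i.val + 1)) (fun j : Fin n => Y (j.val + 1)))))
    {lam mu : K} (hlm : lam * mu ≠ 0) (hωbil : IsBilinMap K V K ω)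
    (hω1 : ω (X 1) (Y n) = lam)
    (hω2 : ∀ i, 2 ≤ i → i ≤ n → ω (X i) (Y (n + 1 - i)) = (-1 : K) ^ (n - i) * mu)
    (hωXY0 : ∀ i j, 1 ≤ i → i ≤ n → 1 ≤ j → j ≤ n →
      ¬(i = 1 ∧ j = n) → ¬(2 ≤ i ∧ j = n + 1 - i) → ω (X i) (Y j) = 0)
    (hωXX : ∀ i j, 1 ≤ i → i ≤ n → 1 ≤ j → j ≤ n → ω (X i) (X j) = 0)
    (hωYY : ∀ i j, 1 ≤ i → i ≤ n → 1 ≤ j → j ≤ n → ω (Y i) (Y j) = 0)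
    (hωYX : ∀ i j, 1 ≤ i → i ≤ n → 1 ≤ j → j ≤ n → ω (Y j) (X i) = -ω (X i) (Y j)) :
    IsNondegForm K V ω := by
  have hpair : ∀ i, 2 ≤ i → i ≤ n → ω (X i) (Y (n + 1 - i)) ≠ 0 := fun i h₁ h₂ => by
    rw [hω2 i h₁ h₂]
    exact mul_ne_zero (pow_ne_zero _ (neg_ne_zero.2 one_ne_zero)) (right_ne_zero_of_mul hlm)
  refine fun x => hωbil.toLinearMap₂.eq_zero_of_forall_apply_eq_zero_of_basis
    (Module.Basis.mk hind hspan) (Sum.elim (fun i => Y (n - i.val)) (fun j => X (n - j.val)))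
    ?_ ?_
  · rintro (i | i) (j | j) hij <;> have := i.isLt <;> have := j.isLt <;>
      simp only [Module.Basis.mk_apply, Sum.elim_inl, Sum.elim_inr,
        IsBilinMap.toLinearMap₂_apply]
    · have : i.val ≠ j.val := fun h => hij (congrArg Sum.inl (Fin.ext h))
      exact hωXY0 _ _ (by omega) (by omega) (by omega) (by omega) (by omega) (by omega)
    · exact hωXX _ _ (by omega) (by omega) (by omega) (by omega)
    · exact hωYY _ _ (by omega) (by omega) (by omega) (by omega)
    · have : i.val ≠ j.val := fun h => hij (congrArg Sum.inr (Fin.ext h))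
      rw [hωYX _ _ (by omega) (by omega) (by omega) (by omega),
        hωXY0 _ _ (by omega) (by omega) (by omega) (by omega) (by omega) (by omega), neg_zero]
  · rintro (i | i) <;> have := i.isLt <;>
      simp only [Module.Basis.mk_apply, Sum.elim_inl, Sum.elim_inr,
        IsBilinMap.toLinearMap₂_apply]
    · obtain hi | hi := Nat.eq_zero_or_pos i.val
      · rw [hi, zero_add, Nat.sub_zero, hω1]
        exact left_ne_zero_of_mul hlm
      · rw [show n - i.val = n + 1 - (i.val + 1) by omega]
        exact hpair _ (by omega) (by omega)
    · rw [hωYX _ _ (by omega) (by omega) (by omega) (by omega), neg_ne_zero]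
      by_cases hi : i.val + 1 = n
      · rw [hi, show n - i.val = 1 by omega, hω1]
        exact left_ne_zero_of_mul hlm
      · rw [show i.val + 1 = n + 1 - (n - i.val) by omega]
        exact hpair _ (by omega) (by omega)

end Filiform

theorem filiform_periplectic_form_general
    (K V : Type*) [Field K] [AddCommGroup V] [Module K V]
    (n : ℕ)
    (sub : Bool → Submodule K V) (br : V → V → V)
    (hLie : IsLieSuperAlg K V sub br)
    (X Y : ℕ → V)
    -- parities of the basis vectors
    (hXeven : ∀ i, 1 ≤ i → i ≤ n → X i ∈ sub false)
    (hYodd : ∀ j, 1 ≤ j → j ≤ n → Y j ∈ sub true)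
    -- `X₁,…,Xₙ, Y₁,…,Yₙ` is a basis of `V`
    (hind : LinearIndependent K
      (Sum.elim (fun i : Fin n => X (i.val + 1)) (fun j : Fin n => Y (j.val + 1))))
    (hspan : ⊤ ≤ Submodule.span K (Set.range
      (Sum.elim (fun i : Fin n => X (i.val + 1)) (fun j : Fin n => Y (j.val + 1)))))
    -- the filiform bracket relations
    (hbrXX : ∀ i, 2 ≤ i → i ≤ n - 1 → br (X 1) (X i) = X (i + 1))
    (hbrX1n : br (X 1) (X n) = 0)
    (hbrX11 : br (X 1) (X 1) = 0)
    (hbrXX0 : ∀ i j, 2 ≤ i → i ≤ n → 2 ≤ j → j ≤ n → br (X i) (X j) = 0)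
    (hbrXY : ∀ j, 1 ≤ j → j ≤ n - 1 → br (X 1) (Y j) = Y (j + 1))
    (hbrXYn : br (X 1) (Y n) = 0)
    (hbrXY0 : ∀ i j, 2 ≤ i → i ≤ n → 1 ≤ j → j ≤ n → br (X i) (Y j) = 0)
    (hbrYY : ∀ i j, 1 ≤ i → i ≤ n → 1 ≤ j → j ≤ n → br (Y i) (Y j) = 0)
    -- the form
    (lam mu : K) (hlm : lam * mu ≠ 0)
    (ω : V → V → K) (hωbil : IsBilinMap K V K ω)
    (hω1 : ω (X 1) (Y n) = lam)
    (hω2 : ∀ i, 2 ≤ i → i ≤ n → ω (X i) (Y (n + 1 - i)) = (-1 : K) ^ (n - i) * mu)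
    (hωXY0 : ∀ i j, 1 ≤ i → i ≤ n → 1 ≤ j → j ≤ n →
      ¬(i = 1 ∧ j = n) → ¬(2 ≤ i ∧ j = n + 1 - i) → ω (X i) (Y j) = 0)
    (hωXX : ∀ i j, 1 ≤ i → i ≤ n → 1 ≤ j → j ≤ n → ω (X i) (X j) = 0)
    (hωYY : ∀ i j, 1 ≤ i → i ≤ n → 1 ≤ j → j ≤ n → ω (Y i) (Y j) = 0)
    (hωYX : ∀ i j, 1 ≤ i → i ≤ n → 1 ≤ j → j ≤ n → ω (Y j) (X i) = -ω (X i) (Y j)) :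
    IsClosedForm K V sub br ω ∧ IsSuperSkew K V sub ω ∧ IsNondegForm K V ω ∧
      IsOddForm K V sub ω := by
  obtain ⟨hV₀, hV₁⟩ := Submodule.span_eq_of_isCompl hLie.compl
    (Set.range_subset_iff.2 fun i => hXeven _ (by omega) (by omega))
    (Set.range_subset_iff.2 fun j => hYodd _ (by omega) (by omega))
    (Set.Sum.elim_range _ _ ▸ hspan)
  have hflip := filiform_form_flip hind hspan hωbil hωXX hωYY hωYX
  have hodd := filiform_form_isOddForm hV₀ hV₁ hωbil hωXX hωYY
  have hbrV₁ : ∀ y ∈ sub true, ∀ z ∈ sub true, br y z = 0 := by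
    rw [← hV₁]
    refine fun y hy z hz => hLie.bilin.apply_eq_zero_of_mem_span ?_ hy hz
    rintro _ ⟨i, rfl⟩ _ ⟨j, rfl⟩
    exact hbrYY _ _ (by omega) (by omega) (by omega) (by omega)
  refine ⟨isClosedForm_of_cocycleSum hLie.graded hodd ?_ ?_, isSuperSkew_of_forall_flip hodd hflip,
    filiform_form_nondegenerate hind hspan hlm hωbil hω1 hω2 hωXY0 hωXX hωYY hωYX, hodd⟩
  · rw [← hV₀, ← hV₁]
    refine fun x hx y hy z hz => cocycleSum_eq_zero_of_mem_span hLie.bilin hωbil ?_ hx hy hz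
    rintro _ ⟨i, rfl⟩ _ ⟨j, rfl⟩ _ ⟨k, rfl⟩
    refine filiform_cocycleSum_X_X_Y hLie hXeven hYodd hbrX11 hbrXX0 hbrXY0 hωbil hflip
      (fun b c hb₁ hb₂ hc₁ hc₂ => filiform_form_ad_X_one_skew hωbil hbrXX hbrX1n hbrXY hbrXYn
        hω2 hωXY0 hb₁ hb₂ hc₁ hc₂) ?_ ?_ ?_ ?_ ?_ ?_ <;> omega
  · intro x hx y hy z hz
    simp only [cocycleSum, hbrV₁ y hy z hz, hbrV₁ x hx y hy, hbrV₁ z hz x hx, hωbil.zero_right,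
      add_zero]

/-- On the filiform Lie superalgebra `L^{n,n}` (with even basis
`X₁,…,Xₙ` and odd basis `Y₁,…,Yₙ`), the odd form determined by
`ω(X₁,Yₙ) = λ`, `ω(X_i, Y_{n+1-i}) = (−1)^{n−i} μ` for `2 ≤ i ≤ n` (with `λμ ≠ 0`),
anti-symmetry, and `ω = 0` on all other pairs of basis vectors, is a closed
anti-symmetric non-degenerate odd (periplectic) form; hence `(L^{n,n}, ω)` is a
periplectic quasi-Frobenius Lie superalgebra. -/
theorem filiform_periplectic_form
    (K V : Type*) [Field K] [AddCommGroup V] [Module K V]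
    (hchar : ringChar K ≠ 2)
    (n : ℕ) (hn : 2 ≤ n)
    (sub : Bool → Submodule K V) (br : V → V → V)
    (hLie : IsLieSuperAlg K V sub br)
    (X Y : ℕ → V)
    -- parities of the basis vectors
    (hXeven : ∀ i, 1 ≤ i → i ≤ n → X i ∈ sub false)
    (hYodd : ∀ j, 1 ≤ j → j ≤ n → Y j ∈ sub true)
    -- `X₁,…,Xₙ, Y₁,…,Yₙ` is a basis of `V`
    (hind : LinearIndependent K
      (Sum.elim (fun i : Fin n => X (i.val + 1)) (fun j : Fin n => Y (j.val + 1))))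
    (hspan : ⊤ ≤ Submodule.span K (Set.range
      (Sum.elim (fun i : Fin n => X (i.val + 1)) (fun j : Fin n => Y (j.val + 1)))))
    -- the filiform bracket relations
    (hbrXX : ∀ i, 2 ≤ i → i ≤ n - 1 → br (X 1) (X i) = X (i + 1))
    (hbrX1n : br (X 1) (X n) = 0)
    (hbrX11 : br (X 1) (X 1) = 0)
    (hbrXX0 : ∀ i j, 2 ≤ i → i ≤ n → 2 ≤ j → j ≤ n → br (X i) (X j) = 0)
    (hbrXY : ∀ j, 1 ≤ j → j ≤ n - 1 → br (X 1) (Y j) = Y (j + 1))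
    (hbrXYn : br (X 1) (Y n) = 0)
    (hbrXY0 : ∀ i j, 2 ≤ i → i ≤ n → 1 ≤ j → j ≤ n → br (X i) (Y j) = 0)
    (hbrYY : ∀ i j, 1 ≤ i → i ≤ n → 1 ≤ j → j ≤ n → br (Y i) (Y j) = 0)
    -- the form
    (lam mu : K) (hlm : lam * mu ≠ 0)
    (ω : V → V → K) (hωbil : IsBilinMap K V K ω)
    (hω1 : ω (X 1) (Y n) = lam)
    (hω2 : ∀ i, 2 ≤ i → i ≤ n → ω (X i) (Y (n + 1 - i)) = (-1 : K) ^ (n - i) * mu)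
    (hωXY0 : ∀ i j, 1 ≤ i → i ≤ n → 1 ≤ j → j ≤ n →
      ¬(i = 1 ∧ j = n) → ¬(2 ≤ i ∧ j = n + 1 - i) → ω (X i) (Y j) = 0)
    (hωXX : ∀ i j, 1 ≤ i → i ≤ n → 1 ≤ j → j ≤ n → ω (X i) (X j) = 0)
    (hωYY : ∀ i j, 1 ≤ i → i ≤ n → 1 ≤ j → j ≤ n → ω (Y i) (Y j) = 0)
    (hωYX : ∀ i j, 1 ≤ i → i ≤ n → 1 ≤ j → j ≤ n → ω (Y j) (X i) = -ω (X i) (Y j)) :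
    IsClosedForm K V sub br ω ∧ IsSuperSkew K V sub ω ∧ IsNondegForm K V ω ∧
      IsOddForm K V sub ω :=
  filiform_periplectic_form_general K V n sub br hLie X Y hXeven hYodd hind hspan hbrXX hbrX1n
    hbrX11 hbrXX0 hbrXY hbrXYn hbrXY0 hbrYY lam mu hlm ω hωbil hω1 hω2 hωXY0 hωXX hωYY hωYX
end
end

section
/- Let n ≥ 4 be even and let λ, μ ∈ 𝕂 with λμ ≠ 0. The bilinear form ω on the filiform Lie superalgebra L^{n,n−2} determined (together with anti-symmetry, i.e. ω(X_n,X₁) = -λ and ω(Y_{n−i},X_i) = -ω(X_i,Y_{n−i})) by ω(X₁,X_n) = λ, ω(X_i,Y_{n−i}) = −(−1)^i μ for 2 ≤ i ≤ n−1, and ω = 0 on all other pairs of basis vectors, is a closed anti-symmetric non-degenerate bilinear form on L^{n,n−2} (it is non-homogeneous: neither even nor odd). -/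
noncomputable section

/-!
Both `ω` and the bracket are bilinear, and the even and odd parts are the spans of the `Xᵢ`
and of the `Yⱼ`, so every condition reduces to basis vectors. Since `[odd, odd] = 0` and `ω`
vanishes on odd × odd, closedness only has to be checked on triples `Xₐ, X_b, v` with `v` a basis
vector. There the only non-zero contributions are `ω(Y_c, [X₁, Xᵢ]) = ω(Y_c, X_{i+1})` and
`ω(Xᵢ, [Y_c, X₁]) = -ω(Xᵢ, Y_{c+1})` for `i + c = n - 1`, and they cancel because the sign
`(-1)ⁱ` alternates. Non-degeneracy holds because every basis vector pairs non-trivially with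
exactly one basis vector, and `ω(X₁, Xₙ) = λ`, `ω(X₂, Y_{n-2}) = -μ` show that `ω` is neither
odd nor even.
-/

open Submodule

section LinearAlgebra

variable {K V W : Type*} [Field K] [AddCommGroup V] [Module K V] [AddCommGroup W] [Module K W]

theorem IsLinearMap.eq_zero_on_span {g : V → W} (hg : IsLinearMap K g) {s : Set V}
    (h : ∀ x ∈ s, g x = 0) : ∀ x ∈ span K s, g x = 0 :=
  fun _ hx => (span_le (p := LinearMap.ker hg.mk')).2 h hx

namespace IsBilinMap

variable {f : V → V → W}

theorem isLinearMap_left (hf : IsBilinMap K V W f) (y : V) : IsLinearMap K (f · y) :=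
  ⟨fun _ _ => hf.1 _ _ _, fun c x => hf.2.1 c x y⟩

theorem isLinearMap_right (hf : IsBilinMap K V W f) (x : V) : IsLinearMap K (f x) :=
  ⟨hf.2.2.1 x, fun c y => hf.2.2.2 c x y⟩

theorem map_zero_right (hf : IsBilinMap K V W f) (x : V) : f x 0 = 0 :=
  (hf.isLinearMap_right x).mk'.map_zero

theorem map_neg_right (hf : IsBilinMap K V W f) (x y : V) : f x (-y) = -f x y :=
  (hf.isLinearMap_right x).mk'.map_neg y

theorem map_sub_right (hf : IsBilinMap K V W f) (x y z : V) : f x (y - z) = f x y - f x z :=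
  (hf.isLinearMap_right x).mk'.map_sub y z

theorem eq_zero_on_span (hf : IsBilinMap K V W f) {s t : Set V}
    (h : ∀ x ∈ s, ∀ y ∈ t, f x y = 0) : ∀ x ∈ span K s, ∀ y ∈ span K t, f x y = 0 := by
  have hs : ∀ x ∈ s, ∀ y ∈ span K t, f x y = 0 := fun x hx =>
    (hf.isLinearMap_right x).eq_zero_on_span (h x hx)
  exact fun x hx y hy => (hf.isLinearMap_left y).eq_zero_on_span (fun x' hx' => hs x' hx' y hy) x hx

theorem isNondegForm_of_basis {ω : V → V → K} (hω : IsBilinMap K V K ω) {ι : Type*}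
    (b : Module.Basis ι K V) (v : ι → V) (hdiag : ∀ i, ω (b i) (v i) ≠ 0)
    (hoff : ∀ i j, j ≠ i → ω (b j) (v i) = 0) : IsNondegForm K V ω := by
  intro x hx
  refine b.forall_coord_eq_zero_iff.1 fun i => ?_
  have hpair : (hω.isLinearMap_left (v i)).mk' = ω (b i) (v i) • b.coord i := by
    refine b.ext fun j => ?_
    obtain rfl | hji := eq_or_ne j i
    · simp
    · simp [hoff i j hji, hji]
  simpa [hx, hdiag i] using (LinearMap.congr_fun hpair x).symm

theorem add_swap (hf : IsBilinMap K V W f) : IsBilinMap K V W (fun x y => f x y + f y x) := by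
  obtain ⟨h₁, h₂, h₃, h₄⟩ := hf
  refine ⟨fun x y z => ?_, fun c x y => ?_, fun x y z => ?_, fun c x y => ?_⟩ <;>
    simp only [h₁, h₂, h₃, h₄, smul_add] <;> abel

end IsBilinMap

theorem eq_zero_on_span_of_cyclic {F : V → V → V → K} (hF : ∀ y z, IsLinearMap K (F · y z))
    (hcyc : ∀ x y z, F x y z = F y z x) {s t u : Set V}
    (h : ∀ x ∈ s, ∀ y ∈ t, ∀ z ∈ u, F x y z = 0) :
    ∀ x ∈ span K s, ∀ y ∈ span K t, ∀ z ∈ span K u, F x y z = 0 := by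
  have h₁ : ∀ x ∈ span K s, ∀ y ∈ t, ∀ z ∈ u, F x y z = 0 := fun x hx y hy z hz =>
    (hF y z).eq_zero_on_span (fun x hx => h x hx y hy z hz) x hx
  have h₂ : ∀ x ∈ span K s, ∀ y ∈ span K t, ∀ z ∈ u, F x y z = 0 := fun x hx y hy z hz => by
    rw [hcyc]
    exact (hF z x).eq_zero_on_span (fun y hy => (hcyc x y z) ▸ h₁ x hx y hy z hz) y hy
  intro x hx y hy z hz
  rw [hcyc, hcyc]
  exact (hF x y).eq_zero_on_span (fun z hz => by rw [← hcyc, ← hcyc]; exact h₂ x hx y hy z hz) z hz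

theorem Submodule.eq_of_le_of_disjoint {A B A' B' : Submodule K V} (hAB : Disjoint A B)
    (hA : A' ≤ A) (hB : B' ≤ B) (hsup : A' ⊔ B' = ⊤) : A = A' := by
  have : A' ⊔ B = ⊤ := top_le_iff.1 (hsup ▸ sup_le_sup_left hB A')
  rw [← top_inf_eq A, ← this, sup_inf_assoc_of_le B hA, hAB.symm.eq_bot, sup_bot_eq]

theorem range_comp_add_one_eq_image_Icc {α : Type*} (f : ℕ → α) (n : ℕ) :
    Set.range (fun i : Fin n => f (i.val + 1)) = f '' Set.Icc 1 n := by
  ext x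
  constructor
  · rintro ⟨i, rfl⟩
    exact ⟨i.val + 1, ⟨by omega, i.isLt⟩, rfl⟩
  · rintro ⟨i, ⟨hi, hin⟩, rfl⟩
    exact ⟨⟨i - 1, by omega⟩, congrArg f (Nat.sub_add_cancel hi)⟩

end LinearAlgebra

section Superalgebra

@[simp] theorem ssign_false_left (K : Type*) [Field K] (j : Bool) : ssign K false j = 1 := rfl

@[simp] theorem ssign_false_right (K : Type*) [Field K] (i : Bool) : ssign K i false = 1 := by
  cases i <;> rfl

@[simp] theorem ssign_true_true (K : Type*) [Field K] : ssign K true true = -1 := rfl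

def cyclicSum {K V : Type*} [Field K] (ω : V → V → K) (br : V → V → V) (x y z : V) : K :=
  ω x (br y z) + ω z (br x y) + ω y (br z x)

theorem cyclicSum_rotate {K V : Type*} [Field K] {ω : V → V → K} {br : V → V → V} (x y z : V) :
    cyclicSum ω br x y z = cyclicSum ω br y z x := by
  unfold cyclicSum; ring

variable {K V : Type*} [Field K] [AddCommGroup V] [Module K V] {sub : Bool → Submodule K V}
  {br : V → V → V} {ω : V → V → K}

theorem IsLieSuperAlg.br_swap_of_even (hLie : IsLieSuperAlg K V sub br) {i : Bool} {x y : V}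
    (hx : x ∈ sub false) (hy : y ∈ sub i) : br y x = -br x y := by
  simpa [ssign] using hLie.antisymm false i x hx y hy

theorem isLinearMap_cyclicSum (hω : IsBilinMap K V K ω) (hbr : IsBilinMap K V V br) (y z : V) :
    IsLinearMap K (cyclicSum ω br · y z) := by
  obtain ⟨hω₁, hω₂, hω₃, hω₄⟩ := hω
  obtain ⟨hbr₁, hbr₂, hbr₃, hbr₄⟩ := hbr
  constructor <;> intros <;>
    simp only [cyclicSum, hω₁, hω₂, hω₃, hω₄, hbr₁, hbr₂, hbr₃, hbr₄, smul_eq_mul] <;> ring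

theorem isClosedForm_of_cyclicSum (hLie : IsLieSuperAlg K V sub br) (hω : IsBilinMap K V K ω)
    (hωodd : ∀ x ∈ sub true, ∀ y ∈ sub true, ω x y = 0)
    (hbrodd : ∀ x ∈ sub true, ∀ y ∈ sub true, br x y = 0)
    (hcyc : ∀ x ∈ sub false, ∀ y ∈ sub false, ∀ z, cyclicSum ω br x y z = 0) :
    IsClosedForm K V sub br ω := by
  intro i j k x hx y hy z hz
  have hω0 := hω.map_zero_right
  have hgr := hLie.graded
  cases i <;> cases j <;> cases k <;> simp only [ssign_false_left,
    ssign_false_right, ssign_true_true, one_mul, neg_one_mul]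
  · exact hcyc x hx y hy z
  · exact hcyc x hx y hy z
  · exact (cyclicSum_rotate z x y).symm.trans (hcyc z hz x hx y)
  · rw [hbrodd y hy z hz, hωodd z hz _ (hgr _ _ x hx y hy), hωodd y hy _ (hgr _ _ z hz x hx),
      hω0]
    ring
  · exact (cyclicSum_rotate x y z).trans (hcyc y hy z hz x)
  · rw [hωodd x hx _ (hgr _ _ y hy z hz), hωodd z hz _ (hgr _ _ x hx y hy), hbrodd z hz x hx,
      hω0]
    ring
  · rw [hωodd x hx _ (hgr _ _ y hy z hz), hbrodd x hx y hy, hωodd y hy _ (hgr _ _ z hz x hx),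
      hω0]
    ring
  · rw [hbrodd y hy z hz, hbrodd x hx y hy, hbrodd z hz x hx, hω0, hω0, hω0]
    ring

theorem isSuperSkew_of_even (hωodd : ∀ x ∈ sub true, ∀ y ∈ sub true, ω x y = 0)
    (hskew : ∀ x ∈ sub false, ∀ y, ω x y + ω y x = 0) : IsSuperSkew K V sub ω := by
  intro i j x hx y hy
  cases i <;> cases j <;> simp only [ssign_false_left,
    ssign_false_right, ssign_true_true, one_mul, neg_one_mul, neg_neg]
  · linear_combination hskew x hx y
  · linear_combination hskew x hx y
  · linear_combination hskew y hy x
  · rw [hωodd x hx y hy, hωodd y hy x hx]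

end Superalgebra

section FormValues

variable {K V : Type*} [Field K]

structure HasNonhomogeneousValues (n : ℕ) (lam mu : K) (ω : V → V → K) (X Y : ℕ → V) :
    Prop where
  X_one_X_last : ω (X 1) (X n) = lam
  X_last_X_one : ω (X n) (X 1) = -lam
  X_X : ∀ i j, 1 ≤ i → i ≤ n → 1 ≤ j → j ≤ n →
    ¬(i = 1 ∧ j = n) → ¬(i = n ∧ j = 1) → ω (X i) (X j) = 0
  X_Y_compl : ∀ i, 2 ≤ i → i ≤ n - 1 → ω (X i) (Y (n - i)) = -((-1 : K) ^ i * mu)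
  X_Y : ∀ i j, 1 ≤ i → i ≤ n → 1 ≤ j → j ≤ n - 2 →
    ¬(2 ≤ i ∧ i ≤ n - 1 ∧ j = n - i) → ω (X i) (Y j) = 0
  Y_X : ∀ i j, 1 ≤ i → i ≤ n → 1 ≤ j → j ≤ n - 2 → ω (Y j) (X i) = -ω (X i) (Y j)
  Y_Y : ∀ i j, 1 ≤ i → i ≤ n - 2 → 1 ≤ j → j ≤ n - 2 → ω (Y i) (Y j) = 0

variable {n : ℕ} {X Y : ℕ → V} {lam mu : K} {ω : V → V → K}

namespace HasNonhomogeneousValues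

theorem X_X_eq (hω : HasNonhomogeneousValues n lam mu ω X Y) {p q : ℕ} (hp : 1 ≤ p)
    (hpn : p ≤ n) (hq : 1 ≤ q) (hqn : q ≤ n) :
    ω (X p) (X q) = if p = 1 ∧ q = n then lam else if p = n ∧ q = 1 then -lam else 0 := by
  split_ifs with h₁ h₂
  · rw [h₁.1, h₁.2, hω.X_one_X_last]
  · rw [h₂.1, h₂.2, hω.X_last_X_one]
  · exact hω.X_X p q hp hpn hq hqn h₁ h₂

theorem X_Y_eq (hω : HasNonhomogeneousValues n lam mu ω X Y) {p q : ℕ} (hp : 1 ≤ p)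
    (hpn : p ≤ n) (hq : 1 ≤ q) (hqn : q ≤ n - 2) :
    ω (X p) (Y q) = if 2 ≤ p ∧ p ≤ n - 1 ∧ p + q = n then -((-1 : K) ^ p * mu) else 0 := by
  split_ifs with h
  · obtain rfl : q = n - p := by omega
    exact hω.X_Y_compl p h.1 h.2.1
  · exact hω.X_Y p q hp hpn hq hqn (by omega)

theorem Y_X_eq (hω : HasNonhomogeneousValues n lam mu ω X Y) {p q : ℕ} (hp : 1 ≤ p)
    (hpn : p ≤ n) (hq : 1 ≤ q) (hqn : q ≤ n - 2) :
    ω (Y q) (X p) = if 2 ≤ p ∧ p ≤ n - 1 ∧ p + q = n then (-1 : K) ^ p * mu else 0 := by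
  rw [hω.Y_X p q hp hpn hq hqn, hω.X_Y_eq hp hpn hq hqn]
  split_ifs <;> simp

end HasNonhomogeneousValues

end FormValues

section Filiform

variable {K V : Type*} [Field K] [AddCommGroup V] [Module K V]

structure IsFiliformFamily (n : ℕ) (sub : Bool → Submodule K V) (br : V → V → V)
    (X Y : ℕ → V) : Prop where
  X_mem : ∀ i, 1 ≤ i → i ≤ n → X i ∈ sub false
  Y_mem : ∀ j, 1 ≤ j → j ≤ n - 2 → Y j ∈ sub true
  br_X_one_X : ∀ i, 2 ≤ i → i ≤ n - 1 → br (X 1) (X i) = X (i + 1)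
  br_X_one_X_last : br (X 1) (X n) = 0
  br_X_one_X_one : br (X 1) (X 1) = 0
  br_X_X : ∀ i j, 2 ≤ i → i ≤ n → 2 ≤ j → j ≤ n → br (X i) (X j) = 0
  br_X_one_Y : ∀ j, 1 ≤ j → j ≤ n - 3 → br (X 1) (Y j) = Y (j + 1)
  br_X_one_Y_last : br (X 1) (Y (n - 2)) = 0
  br_X_Y : ∀ i j, 2 ≤ i → i ≤ n → 1 ≤ j → j ≤ n - 2 → br (X i) (Y j) = 0
  br_Y_Y : ∀ i j, 1 ≤ i → i ≤ n - 2 → 1 ≤ j → j ≤ n - 2 → br (Y i) (Y j) = 0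

variable {n : ℕ} {sub : Bool → Submodule K V} {br : V → V → V} {X Y : ℕ → V} {lam mu : K}
  {ω : V → V → K}

namespace IsFiliformFamily

theorem br_X_X_eq (hF : IsFiliformFamily n sub br X Y) (hLie : IsLieSuperAlg K V sub br)
    {p q : ℕ} (hp : 1 ≤ p) (hpn : p ≤ n) (hq : 1 ≤ q) (hqn : q ≤ n) :
    br (X p) (X q) = (if p = 1 ∧ 2 ≤ q ∧ q ≤ n - 1 then X (q + 1) else 0)
      - (if q = 1 ∧ 2 ≤ p ∧ p ≤ n - 1 then X (p + 1) else 0) := by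
  have hswap : br (X q) (X p) = -br (X p) (X q) :=
    hLie.br_swap_of_even (hF.X_mem p hp hpn) (hF.X_mem q hq hqn)
  split_ifs with h₁ h₂ h₂
  · omega
  · rw [h₁.1, hF.br_X_one_X q h₁.2.1 h₁.2.2, sub_zero]
  · rw [h₂.1] at hswap ⊢
    rw [zero_sub, ← hF.br_X_one_X p h₂.2.1 h₂.2.2, hswap, neg_neg]
  · rw [sub_zero]
    obtain ⟨rfl, rfl⟩ | ⟨rfl, rfl⟩ | ⟨rfl, rfl⟩ | ⟨hp₂, hq₂⟩ :
        (p = 1 ∧ q = 1) ∨ (p = 1 ∧ q = n) ∨ (p = n ∧ q = 1) ∨ (2 ≤ p ∧ 2 ≤ q) := by omega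
    · exact hF.br_X_one_X_one
    · exact hF.br_X_one_X_last
    · rw [← neg_eq_zero, ← hswap, hF.br_X_one_X_last]
    · exact hF.br_X_X p q hp₂ hpn hq₂ hqn

theorem br_X_Y_eq (hF : IsFiliformFamily n sub br X Y) {p q : ℕ} (hp : 1 ≤ p) (hpn : p ≤ n)
    (hq : 1 ≤ q) (hqn : q ≤ n - 2) :
    br (X p) (Y q) = if p = 1 ∧ q ≤ n - 3 then Y (q + 1) else 0 := by
  split_ifs with h
  · rw [h.1, hF.br_X_one_Y q hq h.2]
  · obtain ⟨rfl, rfl⟩ | hp₂ : (p = 1 ∧ q = n - 2) ∨ 2 ≤ p := by omega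
    · exact hF.br_X_one_Y_last
    · exact hF.br_X_Y p q hp₂ hpn hq hqn

end IsFiliformFamily

theorem form_X_br_X_X (hF : IsFiliformFamily n sub br X Y) (hLie : IsLieSuperAlg K V sub br)
    (hω : HasNonhomogeneousValues n lam mu ω X Y) (hωb : IsBilinMap K V K ω)
    {a b c : ℕ} (ha : 1 ≤ a) (han : a ≤ n) (hb : 1 ≤ b) (hbn : b ≤ n)
    (hc : 1 ≤ c) (hcn : c ≤ n) :
    ω (X a) (br (X b) (X c)) = (if a = 1 ∧ b = 1 ∧ c = n - 1 then lam else 0)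
      - (if a = 1 ∧ c = 1 ∧ b = n - 1 then lam else 0) := by
  rw [hF.br_X_X_eq hLie hb hbn hc hcn]
  split_ifs <;> simp (disch := omega) only [hωb.map_sub_right, hωb.map_zero_right, hω.X_X_eq] <;>
    (try split_ifs) <;> first | ring1 | omega

theorem form_X_br_X_Y (hF : IsFiliformFamily n sub br X Y)
    (hω : HasNonhomogeneousValues n lam mu ω X Y) (hωb : IsBilinMap K V K ω)
    {a b c : ℕ} (ha : 1 ≤ a) (han : a ≤ n) (hb : 1 ≤ b) (hbn : b ≤ n)
    (hc : 1 ≤ c) (hcn : c ≤ n - 2) :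
    ω (X a) (br (X b) (Y c)) =
      if b = 1 ∧ 2 ≤ a ∧ a ≤ n - 1 ∧ a + c = n - 1 then -((-1 : K) ^ a * mu) else 0 := by
  rw [hF.br_X_Y_eq hb hbn hc hcn]
  split_ifs <;> simp (disch := omega) only [hωb.map_zero_right, hω.X_Y_eq] <;>
    (try split_ifs) <;> first | rfl | omega

theorem form_Y_br_X_X (hF : IsFiliformFamily n sub br X Y) (hLie : IsLieSuperAlg K V sub br)
    (hω : HasNonhomogeneousValues n lam mu ω X Y) (hωb : IsBilinMap K V K ω)
    {a b c : ℕ} (ha : 1 ≤ a) (han : a ≤ n) (hb : 1 ≤ b) (hbn : b ≤ n)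
    (hc : 1 ≤ c) (hcn : c ≤ n - 2) :
    ω (Y c) (br (X a) (X b)) =
      (if a = 1 ∧ 2 ≤ b ∧ b ≤ n - 2 ∧ b + c = n - 1 then (-1 : K) ^ (b + 1) * mu else 0)
        + (if b = 1 ∧ 2 ≤ a ∧ a ≤ n - 2 ∧ a + c = n - 1 then (-1 : K) ^ a * mu else 0) := by
  rw [hF.br_X_X_eq hLie ha han hb hbn]
  split_ifs <;> simp (disch := omega) only [hωb.map_sub_right, hωb.map_zero_right, hω.Y_X_eq] <;>
    (try split_ifs) <;> first | ring1 | omega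

theorem cyclicSum_X_X_X (hF : IsFiliformFamily n sub br X Y) (hLie : IsLieSuperAlg K V sub br)
    (hω : HasNonhomogeneousValues n lam mu ω X Y) (hωb : IsBilinMap K V K ω)
    {a b c : ℕ} (ha : 1 ≤ a) (han : a ≤ n) (hb : 1 ≤ b) (hbn : b ≤ n)
    (hc : 1 ≤ c) (hcn : c ≤ n) : cyclicSum ω br (X a) (X b) (X c) = 0 := by
  rw [cyclicSum, form_X_br_X_X hF hLie hω hωb ha han hb hbn hc hcn,
    form_X_br_X_X hF hLie hω hωb hc hcn ha han hb hbn,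
    form_X_br_X_X hF hLie hω hωb hb hbn hc hcn ha han]
  split_ifs <;> first | ring1 | omega

theorem cyclicSum_X_X_Y (hF : IsFiliformFamily n sub br X Y) (hLie : IsLieSuperAlg K V sub br)
    (hω : HasNonhomogeneousValues n lam mu ω X Y) (hωb : IsBilinMap K V K ω)
    {a b c : ℕ} (ha : 1 ≤ a) (han : a ≤ n) (hb : 1 ≤ b) (hbn : b ≤ n)
    (hc : 1 ≤ c) (hcn : c ≤ n - 2) : cyclicSum ω br (X a) (X b) (Y c) = 0 := by
  rw [cyclicSum, form_X_br_X_Y hF hω hωb ha han hb hbn hc hcn,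
    form_Y_br_X_X hF hLie hω hωb ha han hb hbn hc hcn,
    hLie.br_swap_of_even (hF.X_mem a ha han) (hF.Y_mem c hc hcn), hωb.map_neg_right,
    form_X_br_X_Y hF hω hωb hb hbn ha han hc hcn]
  split_ifs <;> first | ring1 | omega

theorem IsFiliformFamily.sub_eq_span (hF : IsFiliformFamily n sub br X Y)
    (hLie : IsLieSuperAlg K V sub br)
    (hgen : span K (X '' Set.Icc 1 n ∪ Y '' Set.Icc 1 (n - 2)) = ⊤) :
    sub false = span K (X '' Set.Icc 1 n) ∧ sub true = span K (Y '' Set.Icc 1 (n - 2)) := by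
  have hX : span K (X '' Set.Icc 1 n) ≤ sub false :=
    span_le.2 (Set.image_subset_iff.2 fun i hi => hF.X_mem i hi.1 hi.2)
  have hY : span K (Y '' Set.Icc 1 (n - 2)) ≤ sub true :=
    span_le.2 (Set.image_subset_iff.2 fun j hj => hF.Y_mem j hj.1 hj.2)
  rw [span_union] at hgen
  exact ⟨eq_of_le_of_disjoint hLie.compl.disjoint hX hY hgen,
    eq_of_le_of_disjoint hLie.compl.disjoint.symm hY hX (by rwa [sup_comm] at hgen)⟩

theorem IsFiliformFamily.br_span_Y_eq_zero (hF : IsFiliformFamily n sub br X Y)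
    (hLie : IsLieSuperAlg K V sub br) :
    ∀ x ∈ span K (Y '' Set.Icc 1 (n - 2)), ∀ y ∈ span K (Y '' Set.Icc 1 (n - 2)), br x y = 0 :=
  hLie.bilin.eq_zero_on_span <| by
    rintro _ ⟨i, hi, rfl⟩ _ ⟨j, hj, rfl⟩
    exact hF.br_Y_Y i j hi.1 hi.2 hj.1 hj.2

theorem HasNonhomogeneousValues.form_span_Y_eq_zero
    (hω : HasNonhomogeneousValues n lam mu ω X Y) (hωb : IsBilinMap K V K ω) :
    ∀ x ∈ span K (Y '' Set.Icc 1 (n - 2)), ∀ y ∈ span K (Y '' Set.Icc 1 (n - 2)), ω x y = 0 :=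
  hωb.eq_zero_on_span <| by
    rintro _ ⟨i, hi, rfl⟩ _ ⟨j, hj, rfl⟩
    exact hω.Y_Y i j hi.1 hi.2 hj.1 hj.2

theorem HasNonhomogeneousValues.form_add_swap_eq_zero
    (hω : HasNonhomogeneousValues n lam mu ω X Y) (hωb : IsBilinMap K V K ω) (hn : 2 ≤ n)
    (hgen : span K (X '' Set.Icc 1 n ∪ Y '' Set.Icc 1 (n - 2)) = ⊤) :
    ∀ x ∈ span K (X '' Set.Icc 1 n), ∀ y, ω x y + ω y x = 0 := by
  intro x hx y
  refine hωb.add_swap.eq_zero_on_span ?_ x hx y (hgen ▸ mem_top)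
  rintro _ ⟨a, ⟨ha, han⟩, rfl⟩ _ (⟨b, ⟨hb, hbn⟩, rfl⟩ | ⟨c, ⟨hc, hcn⟩, rfl⟩)
  · rw [hω.X_X_eq ha han hb hbn, hω.X_X_eq hb hbn ha han]
    split_ifs <;> first | ring1 | omega
  · rw [hω.Y_X a c ha han hc hcn, add_neg_cancel]

theorem cyclicSum_eq_zero (hF : IsFiliformFamily n sub br X Y) (hLie : IsLieSuperAlg K V sub br)
    (hω : HasNonhomogeneousValues n lam mu ω X Y) (hωb : IsBilinMap K V K ω)
    (hgen : span K (X '' Set.Icc 1 n ∪ Y '' Set.Icc 1 (n - 2)) = ⊤) :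
    ∀ x ∈ span K (X '' Set.Icc 1 n), ∀ y ∈ span K (X '' Set.Icc 1 n), ∀ z,
      cyclicSum ω br x y z = 0 := by
  intro x hx y hy z
  refine eq_zero_on_span_of_cyclic (isLinearMap_cyclicSum hωb hLie.bilin) cyclicSum_rotate ?_
    x hx y hy z (hgen ▸ mem_top)
  rintro _ ⟨a, ⟨ha, han⟩, rfl⟩ _ ⟨b, ⟨hb, hbn⟩, rfl⟩ _ (⟨c, ⟨hc, hcn⟩, rfl⟩ | ⟨c, ⟨hc, hcn⟩, rfl⟩)
  · exact cyclicSum_X_X_X hF hLie hω hωb ha han hb hbn hc hcn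
  · exact cyclicSum_X_X_Y hF hLie hω hωb ha han hb hbn hc hcn

theorem HasNonhomogeneousValues.isNondegForm (hω : HasNonhomogeneousValues n lam mu ω X Y)
    (hωb : IsBilinMap K V K ω) (hlam : lam ≠ 0) (hmu : mu ≠ 0)
    (hind : LinearIndependent K
      (Sum.elim (fun i : Fin n => X (i.val + 1)) (fun j : Fin (n - 2) => Y (j.val + 1))))
    (hspan : ⊤ ≤ span K (Set.range
      (Sum.elim (fun i : Fin n => X (i.val + 1)) (fun j : Fin (n - 2) => Y (j.val + 1))))) :
    IsNondegForm K V ω := by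
  -- `X 1 ↔ X n` and `X i ↔ Y (n - i)`: every basis vector pairs with exactly one partner.
  refine hωb.isNondegForm_of_basis (Module.Basis.mk hind hspan)
    (Sum.elim (fun a => if a.val = 0 then X n else if a.val + 1 = n then X 1 else
      Y (n - (a.val + 1))) (fun c => X (n - (c.val + 1)))) ?_ ?_
  · rintro (a | c) <;> simp only [Module.Basis.mk_apply, Sum.elim_inl, Sum.elim_inr] <;>
      (try split_ifs) <;> simp (disch := omega) only [hω.X_X_eq, hω.X_Y_eq, hω.Y_X_eq, and_true] <;>
      (try split_ifs) <;> first | omega | simp [hlam, hmu]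
  · rintro (a | c) (a' | c') hne <;>
      simp only [ne_eq, Sum.inl.injEq, Sum.inr.injEq, Fin.ext_iff, reduceCtorEq,
        not_false_eq_true] at hne <;>
      simp only [Module.Basis.mk_apply, Sum.elim_inl, Sum.elim_inr] <;> (try split_ifs) <;>
      simp (disch := omega) only [hω.X_X_eq, hω.X_Y_eq, hω.Y_X_eq, hω.Y_Y] <;>
      (try split_ifs) <;> first | rfl | omega

end Filiform

theorem filiform_nonhomogeneous_form_general
    (K V : Type*) [Field K] [AddCommGroup V] [Module K V]
    (n : ℕ) (hn : 4 ≤ n)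
    (sub : Bool → Submodule K V) (br : V → V → V)
    (hLie : IsLieSuperAlg K V sub br)
    (X Y : ℕ → V)
    (hXeven : ∀ i, 1 ≤ i → i ≤ n → X i ∈ sub false)
    (hYodd : ∀ j, 1 ≤ j → j ≤ n - 2 → Y j ∈ sub true)
    (hind : LinearIndependent K
      (Sum.elim (fun i : Fin n => X (i.val + 1)) (fun j : Fin (n - 2) => Y (j.val + 1))))
    (hspan : ⊤ ≤ Submodule.span K (Set.range
      (Sum.elim (fun i : Fin n => X (i.val + 1)) (fun j : Fin (n - 2) => Y (j.val + 1)))))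
    (hbrXX : ∀ i, 2 ≤ i → i ≤ n - 1 → br (X 1) (X i) = X (i + 1))
    (hbrX1n : br (X 1) (X n) = 0)
    (hbrX11 : br (X 1) (X 1) = 0)
    (hbrXX0 : ∀ i j, 2 ≤ i → i ≤ n → 2 ≤ j → j ≤ n → br (X i) (X j) = 0)
    (hbrXY : ∀ j, 1 ≤ j → j ≤ n - 3 → br (X 1) (Y j) = Y (j + 1))
    (hbrXYm : br (X 1) (Y (n - 2)) = 0)
    (hbrXY0 : ∀ i j, 2 ≤ i → i ≤ n → 1 ≤ j → j ≤ n - 2 → br (X i) (Y j) = 0)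
    (hbrYY : ∀ i j, 1 ≤ i → i ≤ n - 2 → 1 ≤ j → j ≤ n - 2 → br (Y i) (Y j) = 0)
    -- the form
    (lam mu : K) (hlm : lam * mu ≠ 0)
    (ω : V → V → K) (hωbil : IsBilinMap K V K ω)
    (hω1 : ω (X 1) (X n) = lam)
    (hω1' : ω (X n) (X 1) = -lam)
    (hωXX0 : ∀ i j, 1 ≤ i → i ≤ n → 1 ≤ j → j ≤ n →
      ¬(i = 1 ∧ j = n) → ¬(i = n ∧ j = 1) → ω (X i) (X j) = 0)
    (hω2 : ∀ i, 2 ≤ i → i ≤ n - 1 → ω (X i) (Y (n - i)) = -((-1 : K) ^ i * mu))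
    (hωXY0 : ∀ i j, 1 ≤ i → i ≤ n → 1 ≤ j → j ≤ n - 2 →
      ¬(2 ≤ i ∧ i ≤ n - 1 ∧ j = n - i) → ω (X i) (Y j) = 0)
    (hωYX : ∀ i j, 1 ≤ i → i ≤ n → 1 ≤ j → j ≤ n - 2 → ω (Y j) (X i) = -ω (X i) (Y j))
    (hωYY : ∀ i j, 1 ≤ i → i ≤ n - 2 → 1 ≤ j → j ≤ n - 2 → ω (Y i) (Y j) = 0) :
    IsClosedForm K V sub br ω ∧ IsSuperSkew K V sub ω ∧ IsNondegForm K V ω ∧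
      ¬IsEvenForm K V sub ω ∧ ¬IsOddForm K V sub ω := by
  have hF : IsFiliformFamily n sub br X Y :=
    ⟨hXeven, hYodd, hbrXX, hbrX1n, hbrX11, hbrXX0, hbrXY, hbrXYm, hbrXY0, hbrYY⟩
  have hω : HasNonhomogeneousValues n lam mu ω X Y := ⟨hω1, hω1', hωXX0, hω2, hωXY0, hωYX, hωYY⟩
  have hgen : span K (X '' Set.Icc 1 n ∪ Y '' Set.Icc 1 (n - 2)) = ⊤ := by
    rw [Set.Sum.elim_range, range_comp_add_one_eq_image_Icc,
      range_comp_add_one_eq_image_Icc] at hspan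
    exact top_unique hspan
  obtain ⟨hsub₀, hsub₁⟩ := hF.sub_eq_span hLie hgen
  have hlam : lam ≠ 0 := left_ne_zero_of_mul hlm
  have hmu : mu ≠ 0 := right_ne_zero_of_mul hlm
  have hωodd : ∀ x ∈ sub true, ∀ y ∈ sub true, ω x y = 0 :=
    hsub₁ ▸ hω.form_span_Y_eq_zero hωbil
  refine ⟨isClosedForm_of_cyclicSum hLie hωbil hωodd (hsub₁ ▸ hF.br_span_Y_eq_zero hLie)
      (hsub₀ ▸ cyclicSum_eq_zero hF hLie hω hωbil hgen),
    isSuperSkew_of_even hωodd (hsub₀ ▸ hω.form_add_swap_eq_zero hωbil (by omega) hgen),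
    hω.isNondegForm hωbil hlam hmu hind hspan, fun heven => hmu ?_, fun hodd => hlam ?_⟩
  · have h := heven (X 2) (Y (n - 2))
      (Or.inl ⟨hXeven 2 one_le_two (by omega), hYodd (n - 2) (by omega) le_rfl⟩)
    rw [hω2 2 le_rfl (by omega)] at h
    simpa using h
  · rw [← hω1]
    exact hodd false (X 1) (hXeven 1 le_rfl (by omega)) (X n) (hXeven n (by omega) le_rfl)

/-- For `n ≥ 4` even, the form on the filiform Lie superalgebra
`L^{n,n-2}` determined by `ω(X₁,Xₙ) = λ`, `ω(X_i, Y_{n−i}) = −(−1)^i μ` for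
`2 ≤ i ≤ n−1` (with `λμ ≠ 0`), anti-symmetry, and `ω = 0` on all other pairs of
basis vectors, is a closed anti-symmetric non-degenerate bilinear form
(non-homogeneous: neither even nor odd). -/
theorem filiform_nonhomogeneous_form
    (K V : Type*) [Field K] [AddCommGroup V] [Module K V]
    (hchar : ringChar K ≠ 2)
    (n : ℕ) (hn : 4 ≤ n) (hneven : Even n)
    (sub : Bool → Submodule K V) (br : V → V → V)
    (hLie : IsLieSuperAlg K V sub br)
    (X Y : ℕ → V)
    (hXeven : ∀ i, 1 ≤ i → i ≤ n → X i ∈ sub false)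
    (hYodd : ∀ j, 1 ≤ j → j ≤ n - 2 → Y j ∈ sub true)
    (hind : LinearIndependent K
      (Sum.elim (fun i : Fin n => X (i.val + 1)) (fun j : Fin (n - 2) => Y (j.val + 1))))
    (hspan : ⊤ ≤ Submodule.span K (Set.range
      (Sum.elim (fun i : Fin n => X (i.val + 1)) (fun j : Fin (n - 2) => Y (j.val + 1)))))
    (hbrXX : ∀ i, 2 ≤ i → i ≤ n - 1 → br (X 1) (X i) = X (i + 1))
    (hbrX1n : br (X 1) (X n) = 0)
    (hbrX11 : br (X 1) (X 1) = 0)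
    (hbrXX0 : ∀ i j, 2 ≤ i → i ≤ n → 2 ≤ j → j ≤ n → br (X i) (X j) = 0)
    (hbrXY : ∀ j, 1 ≤ j → j ≤ n - 3 → br (X 1) (Y j) = Y (j + 1))
    (hbrXYm : br (X 1) (Y (n - 2)) = 0)
    (hbrXY0 : ∀ i j, 2 ≤ i → i ≤ n → 1 ≤ j → j ≤ n - 2 → br (X i) (Y j) = 0)
    (hbrYY : ∀ i j, 1 ≤ i → i ≤ n - 2 → 1 ≤ j → j ≤ n - 2 → br (Y i) (Y j) = 0)
    -- the form
    (lam mu : K) (hlm : lam * mu ≠ 0)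
    (ω : V → V → K) (hωbil : IsBilinMap K V K ω)
    (hω1 : ω (X 1) (X n) = lam)
    (hω1' : ω (X n) (X 1) = -lam)
    (hωXX0 : ∀ i j, 1 ≤ i → i ≤ n → 1 ≤ j → j ≤ n →
      ¬(i = 1 ∧ j = n) → ¬(i = n ∧ j = 1) → ω (X i) (X j) = 0)
    (hω2 : ∀ i, 2 ≤ i → i ≤ n - 1 → ω (X i) (Y (n - i)) = -((-1 : K) ^ i * mu))
    (hωXY0 : ∀ i j, 1 ≤ i → i ≤ n → 1 ≤ j → j ≤ n - 2 →
      ¬(2 ≤ i ∧ i ≤ n - 1 ∧ j = n - i) → ω (X i) (Y j) = 0)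
    (hωYX : ∀ i j, 1 ≤ i → i ≤ n → 1 ≤ j → j ≤ n - 2 → ω (Y j) (X i) = -ω (X i) (Y j))
    (hωYY : ∀ i j, 1 ≤ i → i ≤ n - 2 → 1 ≤ j → j ≤ n - 2 → ω (Y i) (Y j) = 0) :
    IsClosedForm K V sub br ω ∧ IsSuperSkew K V sub ω ∧ IsNondegForm K V ω ∧
      ¬IsEvenForm K V sub ω ∧ ¬IsOddForm K V sub ω :=
  filiform_nonhomogeneous_form_general K V n hn sub br hLie X Y hXeven hYodd hind hspan hbrXX hbrX1n
    hbrX11 hbrXX0 hbrXY hbrXYm hbrXY0 hbrYY lam mu hlm ω hωbil hω1 hω1' hωXX0 hω2 hωXY0 hωYX hωYY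
end
end
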